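/- Let D_x be the derivation with D_x(y_k) = y_{k+1} on polynomials in y3,...,y8. Define R5 = 3*y3*y5 - 5*y4^2, R6 = 9*y3^2*y6 - 45*y3*y4*y5 + 40*y4^3, R7 = 9*y3^3*y7 - 63*y3^2*y4*y6 + 105*y3*y4^2*y5 - 35*y4^4, and R8 = 9*y3^4*y8 - 84*y3^3*y4*y7 + 210*y3^2*y4^2*y6 - 105*y3^2*y4*y5^2 + 210*y3*y4^3*y5 - 280*y4^5. Then y3*D_x(R7) - (16/3)*y4*R7 = R8 - (7/3)*R5*R6. -/

import Mathlib

/-!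
Clearing the denominator 3, the identity becomes `3 y₃ D R₇ − 16 y₄ R₇ = 3 R₈ − 7 R₅ R₆`, which
holds over any coefficient ring: expanding `D R₇` by the Leibniz rule reduces it to a polynomial
identity in `y₃, …, y₈`. The rational scalars are then recovered from `3 · (1/3) = 1`.
-/

namespace Derivation

variable {R A : Type*} [CommSemiring R] [CommSemiring A] [Algebra R A] (D : Derivation R A A)

@[simp]
theorem map_ofNat (n : ℕ) [n.AtLeastTwo] : D (OfNat.ofNat n : A) = 0 := by
  rw [← Nat.cast_ofNat, D.map_natCast]

end Derivation

section JetIdentity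

variable {A : Type*} [CommRing A]

def R5 (y3 y4 y5 : A) : A := 3 * y3 * y5 - 5 * y4 ^ 2

def R6 (y3 y4 y5 y6 : A) : A := 9 * y3 ^ 2 * y6 - 45 * y3 * y4 * y5 + 40 * y4 ^ 3

def R7 (y3 y4 y5 y6 y7 : A) : A :=
  9 * y3 ^ 3 * y7 - 63 * y3 ^ 2 * y4 * y6 + 105 * y3 * y4 ^ 2 * y5 - 35 * y4 ^ 4

def R8 (y3 y4 y5 y6 y7 y8 : A) : A :=
  9 * y3 ^ 4 * y8 - 84 * y3 ^ 3 * y4 * y7 + 210 * y3 ^ 2 * y4 ^ 2 * y6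
    - 105 * y3 ^ 2 * y4 * y5 ^ 2 + 210 * y3 * y4 ^ 3 * y5 - 280 * y4 ^ 5

variable {R : Type*} [CommSemiring R] [Algebra R A] (D : Derivation R A A)
  {y3 y4 y5 y6 y7 y8 : A}

theorem Derivation.map_R7 (h3 : D y3 = y4) (h4 : D y4 = y5) (h5 : D y5 = y6) (h6 : D y6 = y7)
    (h7 : D y7 = y8) :
    D (R7 y3 y4 y5 y6 y7) = 9 * y3 ^ 3 * y8 - 36 * y3 ^ 2 * y4 * y7 - 63 * y3 ^ 2 * y5 * y6
      - 21 * y3 * y4 ^ 2 * y6 + 210 * y3 * y4 * y5 ^ 2 - 35 * y4 ^ 3 * y5 := by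
  simp only [R7, map_sub, map_add, Derivation.leibniz, Derivation.leibniz_pow, D.map_ofNat,
    h3, h4, h5, h6, h7, smul_eq_mul, nsmul_eq_mul]
  push_cast
  ring

theorem three_mul_nabla16_R7 (h3 : D y3 = y4) (h4 : D y4 = y5) (h5 : D y5 = y6)
    (h6 : D y6 = y7) (h7 : D y7 = y8) :
    3 * y3 * D (R7 y3 y4 y5 y6 y7) - 16 * y4 * R7 y3 y4 y5 y6 y7
      = 3 * R8 y3 y4 y5 y6 y7 y8 - 7 * R5 y3 y4 y5 * R6 y3 y4 y5 y6 := by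
  rw [D.map_R7 h3 h4 h5 h6 h7]
  unfold R5 R6 R7 R8
  ring

end JetIdentity

theorem nabla16_R7 {A : Type*} [CommRing A] [Algebra ℚ A] (D : Derivation ℚ A A)
    (y3 y4 y5 y6 y7 y8 : A) (h3 : D y3 = y4) (h4 : D y4 = y5) (h5 : D y5 = y6)
    (h6 : D y6 = y7) (h7 : D y7 = y8) :
    y3 * D (9 * y3 ^ 3 * y7 - 63 * y3 ^ 2 * y4 * y6 + 105 * y3 * y4 ^ 2 * y5 - 35 * y4 ^ 4)
      - (16 / 3 : ℚ) • (y4 *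
          (9 * y3 ^ 3 * y7 - 63 * y3 ^ 2 * y4 * y6 + 105 * y3 * y4 ^ 2 * y5 - 35 * y4 ^ 4))
      = (9 * y3 ^ 4 * y8 - 84 * y3 ^ 3 * y4 * y7 + 210 * y3 ^ 2 * y4 ^ 2 * y6
          - 105 * y3 ^ 2 * y4 * y5 ^ 2 + 210 * y3 * y4 ^ 3 * y5 - 280 * y4 ^ 5)
        - (7 / 3 : ℚ) • ((3 * y3 * y5 - 5 * y4 ^ 2)
            * (9 * y3 ^ 2 * y6 - 45 * y3 * y4 * y5 + 40 * y4 ^ 3)) := by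
  change y3 * D (R7 y3 y4 y5 y6 y7) - (16 / 3 : ℚ) • (y4 * R7 y3 y4 y5 y6 y7)
    = R8 y3 y4 y5 y6 y7 y8 - (7 / 3 : ℚ) • (R5 y3 y4 y5 * R6 y3 y4 y5 y6)
  have third : 3 * algebraMap ℚ A (1 / 3) = 1 := by
    rw [← map_ofNat (algebraMap ℚ A) 3, ← map_mul]
    norm_num
  rw [Algebra.smul_def, Algebra.smul_def, show (16 / 3 : ℚ) = 16 * (1 / 3) by norm_num,
    show (7 / 3 : ℚ) = 7 * (1 / 3) by norm_num, map_mul, map_mul, map_ofNat, map_ofNat]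
  linear_combination (R8 y3 y4 y5 y6 y7 y8 - y3 * D (R7 y3 y4 y5 y6 y7)) * third
    + algebraMap ℚ A (1 / 3) * three_mul_nabla16_R7 D h3 h4 h5 h6 h7
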